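/- Let n₁,n₂,n₃ ≥ 3 and let W be a subset of vertices of HG(n₁,n₂,n₃;3). Suppose there exist a₁ ≠ b₁ in [n₁], a₂ ∈ [n₂], a₃ ∈ [n₃] and landmarks w₁,w₂,w₃,w₄ such that W_{1,a₁} = {w₁,w₂}, W_{1,b₁} = {w₃,w₄}, W_{2,a₂} = {w₂,w₃}, and W_{3,a₃} = {w₁,w₄} (a forbidden 4-cycle with two blue edges). Then the vertices (a₁,a₂,a₃) and (b₁,a₂,a₃) are not in W and are unresolved by W, so W is not a resolving set. -/

import Mathlib

/-- The generalized Hamming graph `HG(n₁,n₂,n₃;3)`: vertices are triples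
(modeled with `Fin nᵢ`), adjacent iff they differ in all three coordinates. -/
def HG (n₁ n₂ n₃ : ℕ) : SimpleGraph (Fin n₁ × Fin n₂ × Fin n₃) where
  Adj x y := x.1 ≠ y.1 ∧ x.2.1 ≠ y.2.1 ∧ x.2.2 ≠ y.2.2
  symm := ⟨fun x y h => ⟨h.1.symm, h.2.1.symm, h.2.2.symm⟩⟩
  loopless := ⟨fun x h => h.1 rfl⟩

/-- `W` is a resolving set for `HG(n₁,n₂,n₃;3)`: every pair of distinct vertices not
in `W` is resolved by some landmark in `W`. -/
def IsResolving {n₁ n₂ n₃ : ℕ} (W : Set (Fin n₁ × Fin n₂ × Fin n₃)) : Prop :=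
  ∀ x y : Fin n₁ × Fin n₂ × Fin n₃, x ∉ W → y ∉ W → x ≠ y →
    ∃ w ∈ W, (HG n₁ n₂ n₃).dist x w ≠ (HG n₁ n₂ n₃).dist y w

/-- The metric dimension of `HG(n₁,n₂,n₃;3)`: minimum size of a resolving set. -/
noncomputable def metricDim (n₁ n₂ n₃ : ℕ) : ℕ :=
  sInf {k | ∃ W : Set (Fin n₁ × Fin n₂ × Fin n₃), IsResolving W ∧ W.ncard = k}

/-- The block `W_{1,a}`: landmarks whose first coordinate is `a`. -/
def block1 {n₁ n₂ n₃ : ℕ} (W : Set (Fin n₁ × Fin n₂ × Fin n₃)) (a : Fin n₁) :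
    Set (Fin n₁ × Fin n₂ × Fin n₃) := {w ∈ W | w.1 = a}

/-- The block `W_{2,a}`: landmarks whose second coordinate is `a`. -/
def block2 {n₁ n₂ n₃ : ℕ} (W : Set (Fin n₁ × Fin n₂ × Fin n₃)) (a : Fin n₂) :
    Set (Fin n₁ × Fin n₂ × Fin n₃) := {w ∈ W | w.2.1 = a}

/-- The block `W_{3,a}`: landmarks whose third coordinate is `a`. -/
def block3 {n₁ n₂ n₃ : ℕ} (W : Set (Fin n₁ × Fin n₂ × Fin n₃)) (a : Fin n₃) :
    Set (Fin n₁ × Fin n₂ × Fin n₃) := {w ∈ W | w.2.2 = a}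

/-!
Since every nᵢ ≥ 3, any two vertices of `HG n₁ n₂ n₃` have a common neighbour, so distances
are at most 2 and a landmark `w ≠ x` sees `x` at distance 1 or 2 according as `x` is adjacent
to `w` or not. Put `x = (a₁, a₂, a₃)` and `y = (b₁, a₂, a₃)`. Neither is a landmark, because
`W_{2,a₂} = {w₂, w₃}` and `W_{3,a₃} = {w₁, w₄}` are disjoint. The landmarks with first
coordinate `a₁` or `b₁` are `w₁, …, w₄`, and each of them shares the second or the third
coordinate with both `x` and `y`, so it is adjacent to neither; any other landmark is adjacent
to `x` iff it is adjacent to `y`. Hence no landmark separates `x` from `y`.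
-/

namespace HG

variable {n₁ n₂ n₃ : ℕ}

lemma exists_adj_adj (h₁ : 3 ≤ n₁) (h₂ : 3 ≤ n₂) (h₃ : 3 ≤ n₃)
    (x y : Fin n₁ × Fin n₂ × Fin n₃) :
    ∃ z, (HG n₁ n₂ n₃).Adj x z ∧ (HG n₁ n₂ n₃).Adj z y := by
  obtain ⟨c₁, hc₁x, hc₁y⟩ := ENat.exists_ne_ne_of_three_le (by simpa using h₁) x.1 y.1
  obtain ⟨c₂, hc₂x, hc₂y⟩ := ENat.exists_ne_ne_of_three_le (by simpa using h₂) x.2.1 y.2.1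
  obtain ⟨c₃, hc₃x, hc₃y⟩ := ENat.exists_ne_ne_of_three_le (by simpa using h₃) x.2.2 y.2.2
  exact ⟨(c₁, c₂, c₃), ⟨hc₁x.symm, hc₂x.symm, hc₃x.symm⟩, ⟨hc₁y, hc₂y, hc₃y⟩⟩

lemma dist_eq_two_of_not_adj (h₁ : 3 ≤ n₁) (h₂ : 3 ≤ n₂) (h₃ : 3 ≤ n₃)
    {x y : Fin n₁ × Fin n₂ × Fin n₃} (hxy : x ≠ y) (hnadj : ¬ (HG n₁ n₂ n₃).Adj x y) :
    (HG n₁ n₂ n₃).dist x y = 2 := by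
  obtain ⟨z, hxz, hzy⟩ := exists_adj_adj h₁ h₂ h₃ x y
  let p : (HG n₁ n₂ n₃).Walk x y := .cons hxz (.cons hzy .nil)
  have hle : (HG n₁ n₂ n₃).dist x y ≤ 2 := SimpleGraph.dist_le p
  have hpos : 0 < (HG n₁ n₂ n₃).dist x y := SimpleGraph.Reachable.pos_dist_of_ne ⟨p⟩ hxy
  have hne_one : (HG n₁ n₂ n₃).dist x y ≠ 1 := mt SimpleGraph.dist_eq_one_iff_adj.1 hnadj
  omega

lemma dist_eq_dist_of_adj_iff_adj (h₁ : 3 ≤ n₁) (h₂ : 3 ≤ n₂) (h₃ : 3 ≤ n₃)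
    {x y w : Fin n₁ × Fin n₂ × Fin n₃} (hxw : x ≠ w) (hyw : y ≠ w)
    (hadj : (HG n₁ n₂ n₃).Adj x w ↔ (HG n₁ n₂ n₃).Adj y w) :
    (HG n₁ n₂ n₃).dist x w = (HG n₁ n₂ n₃).dist y w := by
  by_cases hx : (HG n₁ n₂ n₃).Adj x w
  · rw [SimpleGraph.dist_eq_one_iff_adj.2 hx, SimpleGraph.dist_eq_one_iff_adj.2 (hadj.1 hx)]
  · rw [dist_eq_two_of_not_adj h₁ h₂ h₃ hxw hx,
      dist_eq_two_of_not_adj h₁ h₂ h₃ hyw (mt hadj.2 hx)]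

end HG

lemma not_isResolving_of_dist_eq {n₁ n₂ n₃ : ℕ} {W : Set (Fin n₁ × Fin n₂ × Fin n₃)}
    {x y : Fin n₁ × Fin n₂ × Fin n₃} (hx : x ∉ W) (hy : y ∉ W) (hxy : x ≠ y)
    (hdist : ∀ w ∈ W, (HG n₁ n₂ n₃).dist x w = (HG n₁ n₂ n₃).dist y w) :
    ¬ IsResolving W := fun hW =>
  let ⟨w, hw, hne⟩ := hW x y hx hy hxy
  hne (hdist w hw)

lemma mk_notMem_of_disjoint_block2_block3 {n₁ n₂ n₃ : ℕ} {W : Set (Fin n₁ × Fin n₂ × Fin n₃)}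
    {a₂ : Fin n₂} {a₃ : Fin n₃} (h : Disjoint (block2 W a₂) (block3 W a₃)) (c : Fin n₁) :
    (c, a₂, a₃) ∉ W := fun hc =>
  Set.disjoint_left.1 h ⟨hc, rfl⟩ ⟨hc, rfl⟩

section ForbiddenCycle

variable {n₁ n₂ n₃ : ℕ} {W : Set (Fin n₁ × Fin n₂ × Fin n₃)} {a₁ b₁ : Fin n₁} {a₂ : Fin n₂}
  {a₃ : Fin n₃} {w₁ w₂ w₃ w₄ : Fin n₁ × Fin n₂ × Fin n₃}

lemma snd_fst_eq_or_snd_snd_eq_of_forbidden_cycle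
    (hB₁ : block1 W a₁ = {w₁, w₂}) (hB₂ : block1 W b₁ = {w₃, w₄})
    (hB₃ : block2 W a₂ = {w₂, w₃}) (hB₄ : block3 W a₃ = {w₁, w₄})
    {w : Fin n₁ × Fin n₂ × Fin n₃} (hw : w ∈ W) (h : w.1 = a₁ ∨ w.1 = b₁) :
    w.2.1 = a₂ ∨ w.2.2 = a₃ := by
  have h₂ : w₂.2.1 = a₂ := (hB₃ ▸ Set.mem_insert w₂ _ : w₂ ∈ block2 W a₂).2
  have h₃ : w₃.2.1 = a₂ := (hB₃ ▸ Set.mem_insert_of_mem _ rfl : w₃ ∈ block2 W a₂).2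
  have h₁ : w₁.2.2 = a₃ := (hB₄ ▸ Set.mem_insert w₁ _ : w₁ ∈ block3 W a₃).2
  have h₄ : w₄.2.2 = a₃ := (hB₄ ▸ Set.mem_insert_of_mem _ rfl : w₄ ∈ block3 W a₃).2
  rcases h with h | h
  · have : w ∈ block1 W a₁ := ⟨hw, h⟩
    rw [hB₁] at this
    rcases this with rfl | rfl
    exacts [.inr h₁, .inl h₂]
  · have : w ∈ block1 W b₁ := ⟨hw, h⟩
    rw [hB₂] at this
    rcases this with rfl | rfl
    exacts [.inl h₃, .inr h₄]

lemma adj_iff_adj_of_forbidden_cycle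
    (hB₁ : block1 W a₁ = {w₁, w₂}) (hB₂ : block1 W b₁ = {w₃, w₄})
    (hB₃ : block2 W a₂ = {w₂, w₃}) (hB₄ : block3 W a₃ = {w₁, w₄})
    {w : Fin n₁ × Fin n₂ × Fin n₃} (hw : w ∈ W) :
    (HG n₁ n₂ n₃).Adj (a₁, a₂, a₃) w ↔ (HG n₁ n₂ n₃).Adj (b₁, a₂, a₃) w := by
  have h := snd_fst_eq_or_snd_snd_eq_of_forbidden_cycle hB₁ hB₂ hB₃ hB₄ hw
  change a₁ ≠ w.1 ∧ a₂ ≠ w.2.1 ∧ a₃ ≠ w.2.2 ↔ b₁ ≠ w.1 ∧ a₂ ≠ w.2.1 ∧ a₃ ≠ w.2.2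
  grind

end ForbiddenCycle

theorem stmt5 (n₁ n₂ n₃ : ℕ) (h₁ : 3 ≤ n₁) (h₂ : 3 ≤ n₂) (h₃ : 3 ≤ n₃)
    (W : Set (Fin n₁ × Fin n₂ × Fin n₃))
    (a₁ b₁ : Fin n₁) (hab : a₁ ≠ b₁) (a₂ : Fin n₂) (a₃ : Fin n₃)
    (w₁ w₂ w₃ w₄ : Fin n₁ × Fin n₂ × Fin n₃)
    (hdist : List.Pairwise (· ≠ ·) [w₁, w₂, w₃, w₄])
    (hB₁ : block1 W a₁ = {w₁, w₂}) (hB₂ : block1 W b₁ = {w₃, w₄})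
    (hB₃ : block2 W a₂ = {w₂, w₃}) (hB₄ : block3 W a₃ = {w₁, w₄}) :
    (a₁, a₂, a₃) ∉ W ∧ (b₁, a₂, a₃) ∉ W ∧
    (∀ w ∈ W, (HG n₁ n₂ n₃).dist (a₁, a₂, a₃) w = (HG n₁ n₂ n₃).dist (b₁, a₂, a₃) w) ∧
    ¬ IsResolving W := by
  have hdisj : Disjoint (block2 W a₂) (block3 W a₃) := by
    rw [hB₃, hB₄]
    grind [List.pairwise_cons, Set.disjoint_insert_left, Set.disjoint_singleton_left]
  have hx := mk_notMem_of_disjoint_block2_block3 hdisj a₁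
  have hy := mk_notMem_of_disjoint_block2_block3 hdisj b₁
  have hdist_eq : ∀ w ∈ W,
      (HG n₁ n₂ n₃).dist (a₁, a₂, a₃) w = (HG n₁ n₂ n₃).dist (b₁, a₂, a₃) w := fun w hw =>
    HG.dist_eq_dist_of_adj_iff_adj h₁ h₂ h₃ (ne_of_mem_of_not_mem hw hx).symm
      (ne_of_mem_of_not_mem hw hy).symm (adj_iff_adj_of_forbidden_cycle hB₁ hB₂ hB₃ hB₄ hw)
  have hxy : (a₁, a₂, a₃) ≠ (b₁, a₂, a₃) := by simpa using hab
  exact ⟨hx, hy, hdist_eq, not_isResolving_of_dist_eq hx hy hxy hdist_eq⟩
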